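/- arXiv:2311.13838 — 3 statements merged into one kernel-verified Lean document; each statement's English description precedes it below -/
import Mathlib

section
/- Let f be a quasi-convex function on a normed vector space E with minimizer x* and optimal value f* = f(x*). Suppose at a point x a nonzero vector g satisfies: for all y, ⟨g, y - x⟩ ≥ 0 implies f(y) ≥ f(x). Let d be a unit vector with ⟨g, d⟩ > 0, and define the directional proximity measure δ = ⟨g, x - x*⟩ / ⟨g, d⟩ ≥ 0. Define μ(r) = sup { f(y) - f* : ‖y - x*‖ ≤ r }. Then f(x) - f* ≤ μ(δ). -/
/-! The point `x* + δ • d` lies on the hyperplane `⟪g, y - x⟫ = 0` through `x`, so the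
quasi-subgradient inequality gives `f x ≤ f (x* + δ • d)`, and this point is at distance `δ`
from `x*`. If `δ < 0`, the same argument with `x*` itself gives `f x ≤ f x*`, while the ball of
radius `δ` is empty and its supremum is `0` by convention. -/

open RealInnerProductSpace

section

variable {E : Type*} [SeminormedAddCommGroup E]

lemma sSup_sub_of_radius_neg {f : E → ℝ} {xstar : E} {r : ℝ} (hr : r < 0) :
    sSup {t : ℝ | ∃ y : E, ‖y - xstar‖ ≤ r ∧ t = f y - f xstar} = 0 := by
  convert Real.sSup_empty
  refine Set.eq_empty_of_forall_notMem fun t ⟨y, hy, _⟩ ↦ ?_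
  linarith [norm_nonneg (y - xstar)]

variable [InnerProductSpace ℝ E]

lemma inner_add_smul_sub_nonneg {g d x xstar : E} (hgd : 0 < ⟪g, d⟫) {t : ℝ}
    (ht : ⟪g, x - xstar⟫ / ⟪g, d⟫ ≤ t) : 0 ≤ ⟪g, xstar + t • d - x⟫ := by
  have hexpand : ⟪g, xstar + t • d - x⟫ = t * ⟪g, d⟫ - ⟪g, x - xstar⟫ := by
    simp only [inner_sub_right, inner_add_right, inner_smul_right]
    ring
  rw [hexpand, sub_nonneg]
  exact (div_le_iff₀ hgd).mp ht

end

theorem stmt_0_general {E : Type*} [NormedAddCommGroup E] [InnerProductSpace ℝ E]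
    (f : E → ℝ) (xstar x g d : E)
    (hquasi : ∀ y : E, (0:ℝ) ≤ inner ℝ g (y - x) → f x ≤ f y)
    (hd : ‖d‖ = 1) (hgd : (0:ℝ) < inner ℝ g d)
    (μ : ℝ → ℝ)
    (hμ : ∀ r : ℝ, μ r = sSup {t : ℝ | ∃ y : E, ‖y - xstar‖ ≤ r ∧ t = f y - f xstar})
    (hbdd : BddAbove {t : ℝ | ∃ y : E,
      ‖y - xstar‖ ≤ (inner ℝ g (x - xstar) : ℝ) / (inner ℝ g d : ℝ) ∧ t = f y - f xstar}) :
    f x - f xstar ≤ μ ((inner ℝ g (x - xstar) : ℝ) / (inner ℝ g d : ℝ)) := by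
  set δ : ℝ := ⟪g, x - xstar⟫ / ⟪g, d⟫
  have hbeyond : ∀ t, δ ≤ t → f x ≤ f (xstar + t • d) := fun t ht ↦
    hquasi _ (inner_add_smul_sub_nonneg hgd ht)
  rw [hμ]
  rcases le_or_gt 0 δ with hδ | hδ
  · have hdist : ‖xstar + δ • d - xstar‖ ≤ δ := by
      simp [norm_smul, abs_of_nonneg hδ, hd]
    have := le_csSup hbdd ⟨_, hdist, rfl⟩
    linarith [hbeyond δ le_rfl]
  · have hx : f x ≤ f xstar := by simpa using hbeyond 0 hδ.le
    rw [sSup_sub_of_radius_neg hδ]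
    linarith

/-- Directional proximity measure bound for quasi-convex minimization:
`f(x) - f* ≤ μ(δ)` where `δ = ⟨g, x - x*⟩ / ⟨g, d⟩`. -/
theorem stmt_0 {E : Type*} [NormedAddCommGroup E] [InnerProductSpace ℝ E]
    (f : E → ℝ) (xstar x g d : E) (hg : g ≠ 0)
    (hmin : ∀ y : E, f xstar ≤ f y)
    (hquasi : ∀ y : E, (0:ℝ) ≤ inner ℝ g (y - x) → f x ≤ f y)
    (hd : ‖d‖ = 1) (hgd : (0:ℝ) < inner ℝ g d)
    (μ : ℝ → ℝ)
    (hμ : ∀ r : ℝ, μ r = sSup {t : ℝ | ∃ y : E, ‖y - xstar‖ ≤ r ∧ t = f y - f xstar})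
    (hbdd : BddAbove {t : ℝ | ∃ y : E,
      ‖y - xstar‖ ≤ (inner ℝ g (x - xstar) : ℝ) / (inner ℝ g d : ℝ) ∧ t = f y - f xstar}) :
    f x - f xstar ≤ μ ((inner ℝ g (x - xstar) : ℝ) / (inner ℝ g d : ℝ)) :=
  stmt_0_general f xstar x g d hquasi hd hgd μ hμ hbdd
end

section
/- Let Q ⊆ E be closed convex, d a 1-strongly convex prox-function with Bregman distance β, g ∈ E*, λ > 0, x_k ∈ Q, and x_{k+1} = argmin_{x ∈ Q} { λ⟨g, x⟩ + β(x_k, x) }. Define φ(λ) = max_{x ∈ Q} { λ⟨g, x_k - x⟩ - β(x_k, x) }. Then for any x ∈ Q: β(x_{k+1}, x) ≤ β(x_k, x) - λ⟨g, x_k - x⟩ + φ(λ). -/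
/-!
Proof idea: the Bregman distance satisfies the three-point identity
`β(x₀, x) - β(x₀, x₁) - β(x₁, x) = ⟨∇d(x₁) - ∇d(x₀), x - x₁⟩`. The optimality condition of the
prox step bounds the right-hand side below by `-λ⟨g, x - x₁⟩`, which leaves
`β(x₁, x) ≤ β(x₀, x) - λ⟨g, x₀ - x⟩ + (λ⟨g, x₀ - x₁⟩ - β(x₀, x₁))`; the bracket is the value at
`x₁` of the function maximised by `φ(λ)`.
-/

open scoped RealInnerProductSpace

section Bregman

variable {E : Type*} [NormedAddCommGroup E] [InnerProductSpace ℝ E]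

/-- `dg` plays the role of the gradient of `d`. -/
def bregmanDiv (d : E → ℝ) (dg : E → E) (u v : E) : ℝ :=
  d v - d u - ⟪dg u, v - u⟫

theorem bregmanDiv_three_point (d : E → ℝ) (dg : E → E) (u v w : E) :
    bregmanDiv d dg u w - bregmanDiv d dg u v - bregmanDiv d dg v w = ⟪dg v - dg u, w - v⟫ := by
  have hsplit : w - u = (w - v) + (v - u) := by abel
  simp only [bregmanDiv, hsplit, inner_add_right, inner_sub_left]
  ring

theorem bregmanDiv_prox_step_le (d : E → ℝ) (dg : E → E) (g : E) (lam : ℝ) {x0 x1 x : E}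
    (hopt : 0 ≤ ⟪lam • g + dg x1 - dg x0, x - x1⟫) :
    bregmanDiv d dg x1 x ≤ bregmanDiv d dg x0 x - lam * ⟪g, x0 - x⟫
      + (lam * ⟪g, x0 - x1⟫ - bregmanDiv d dg x0 x1) := by
  have hthree := bregmanDiv_three_point d dg x0 x1 x
  have hsplit : x0 - x1 = (x0 - x) + (x - x1) := by abel
  rw [add_sub_assoc, inner_add_left, real_inner_smul_left] at hopt
  rw [hsplit, inner_add_right]
  linarith

end Bregman

theorem stmt_2_general {E : Type*} [NormedAddCommGroup E] [InnerProductSpace ℝ E]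
    (Q : Set E)
    (d : E → ℝ) (dg : E → E) (g : E) (lam : ℝ)
    (x0 x1 : E) (hx1 : x1 ∈ Q)
    (β : E → E → ℝ)
    (hβ : ∀ u v : E, β u v = d v - d u - (inner ℝ (dg u) (v - u) : ℝ))
    (hopt : ∀ x ∈ Q, (0:ℝ) ≤ inner ℝ (lam • g + dg x1 - dg x0) (x - x1))
    (φ : ℝ)
    (hφ : φ = sSup {t : ℝ | ∃ x ∈ Q, t = lam * (inner ℝ g (x0 - x) : ℝ) - β x0 x})
    (hbdd : BddAbove {t : ℝ | ∃ x ∈ Q, t = lam * (inner ℝ g (x0 - x) : ℝ) - β x0 x}) :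
    ∀ x ∈ Q, β x1 x ≤ β x0 x - lam * (inner ℝ g (x0 - x) : ℝ) + φ := by
  obtain rfl : β = bregmanDiv d dg := funext fun u => funext fun v => hβ u v
  intro x hx
  have hx1_le_φ : lam * ⟪g, x0 - x1⟫ - bregmanDiv d dg x0 x1 ≤ φ :=
    hφ ▸ le_csSup hbdd ⟨x1, hx1, rfl⟩
  linarith [bregmanDiv_prox_step_le d dg g lam (hopt x hx)]

/-- One-step inequality for the Bregman proximal subgradient step:
`β(x_{k+1}, x) ≤ β(x_k, x) - λ⟨g, x_k - x⟩ + φ(λ)` for all `x ∈ Q`. -/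
theorem stmt_2 {E : Type*} [NormedAddCommGroup E] [InnerProductSpace ℝ E]
    (Q : Set E) (hQc : IsClosed Q) (hQconv : Convex ℝ Q)
    (d : E → ℝ) (dg : E → E) (g : E) (lam : ℝ) (hlam : 0 < lam)
    (x0 x1 : E) (hx0 : x0 ∈ Q) (hx1 : x1 ∈ Q)
    (β : E → E → ℝ)
    (hβ : ∀ u v : E, β u v = d v - d u - (inner ℝ (dg u) (v - u) : ℝ))
    (hopt : ∀ x ∈ Q, (0:ℝ) ≤ inner ℝ (lam • g + dg x1 - dg x0) (x - x1))
    (φ : ℝ)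
    (hφ : φ = sSup {t : ℝ | ∃ x ∈ Q, t = lam * (inner ℝ g (x0 - x) : ℝ) - β x0 x})
    (hbdd : BddAbove {t : ℝ | ∃ x ∈ Q, t = lam * (inner ℝ g (x0 - x) : ℝ) - β x0 x}) :
    ∀ x ∈ Q, β x1 x ≤ β x0 x - lam * (inner ℝ g (x0 - x) : ℝ) + φ :=
  stmt_2_general Q d dg g lam x0 x1 hx1 β hβ hopt φ hφ hbdd
end

section
/- In Euclidean setting (β(x,y) = ½‖x-y‖²_B) with each f_i having L_f-Lipschitz gradients, the Basic Composite Subgradient Method satisfies ½‖x_{k+1}-x*‖²_B ≤ ½‖x_k-x*‖²_B - (1/L_f)[F(x_{k+1}) - F*], hence (1/T)Σ_{k=1}^T F(x_k) - F* ≤ L_f‖x₀-x*‖²_B/(2T). -/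
/-!
Smoothness gives `F(x_{k+1}) ≤ ℓ_{x_k}(x_{k+1}) + ψ(x_{k+1}) + (L/2)‖x_k - x_{k+1}‖²`, and the step
is feasible for the level set `ℓ_{x_k} + ψ ≤ F*`, so `F(x_{k+1}) - F* ≤ (L/2)‖x_k - x_{k+1}‖²`.
The Fejér-type decrease of `‖x_k - x*‖²` by `‖x_k - x_{k+1}‖²` turns this into the per-step
inequality; summing it telescopes to the averaged rate.
-/

open Finset

lemma iSup_le_iSup_add_of_le {ι : Type*} [Finite ι] [Nonempty ι] {f g : ι → ℝ} {c : ℝ}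
    (h : ∀ i, f i ≤ g i + c) : ⨆ i, f i ≤ (⨆ i, g i) + c := by
  rw [ciSup_add (Finite.bddAbove_range g)]
  exact ciSup_mono (Finite.bddAbove_range _) h

lemma sum_Icc_le_sub_of_le_sub_succ {a d : ℕ → ℝ} (h : ∀ k, a (k + 1) ≤ d k - d (k + 1)) :
    ∀ T, ∑ k ∈ Icc 1 T, a k ≤ d 0 - d T
  | 0 => by simp
  | T + 1 => by
    rw [sum_Icc_succ_top (by omega)]
    linarith [sum_Icc_le_sub_of_le_sub_succ h T, h T]

lemma average_sub_le_of_sum_sub_le {u : ℕ → ℝ} {c B : ℝ} {T : ℕ} (hT : 1 ≤ T)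
    (h : ∑ k ∈ Icc 1 T, (u k - c) ≤ B) :
    (1 / (T : ℝ)) * ∑ k ∈ Icc 1 T, u k - c ≤ B / T := by
  have hT' : (0 : ℝ) < T := by exact_mod_cast hT
  rw [sum_sub_distrib, sum_const, Nat.card_Icc, Nat.add_sub_cancel, nsmul_eq_mul] at h
  rw [le_div_iff₀ hT']
  calc (1 / (T : ℝ) * ∑ k ∈ Icc 1 T, u k - c) * T = ∑ k ∈ Icc 1 T, u k - T * c := by
        field_simp
    _ ≤ B := h

theorem stmt_10_general {E : Type*} [NormedAddCommGroup E] [InnerProductSpace ℝ E]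
    (m : ℕ) (hm : 0 < m) (f : Fin m → E → ℝ) (ψ : E → ℝ) (S : Set E)
    (F : E → ℝ) (hF : ∀ y, F y = (⨆ i, f i y) + ψ y)
    (xstar : E)
    (Fstar : ℝ)
    (L : ℝ) (hL : 0 < L)
    (x : ℕ → E) (hx : ∀ k, x k ∈ S)
    (g : ℕ → Fin m → E)
    (hsmooth : ∀ k i, ∀ y ∈ S,
      f i y ≤ f i (x k) + (inner ℝ (g k i) (y - x k) : ℝ) + (1/2) * L * ‖x k - y‖^2)
    (ell : ℕ → E → ℝ)
    (hell : ∀ k y, ell k y = ⨆ i, (f i (x k) + (inner ℝ (g k i) (y - x k) : ℝ)))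
    (hfeas : ∀ k, ell k (x (k+1)) + ψ (x (k+1)) ≤ Fstar)
    (hdec : ∀ k, ‖x (k+1) - xstar‖^2 ≤ ‖x k - xstar‖^2 - ‖x k - x (k+1)‖^2) :
    (∀ k, (1/2) * ‖x (k+1) - xstar‖^2
        ≤ (1/2) * ‖x k - xstar‖^2 - (1/L) * (F (x (k+1)) - Fstar))
      ∧ ∀ T : ℕ, 1 ≤ T →
        (1/(T:ℝ)) * ∑ k ∈ Finset.Icc 1 T, F (x k) - Fstar
          ≤ L * ‖x 0 - xstar‖^2 / (2 * T) := by
  have : Nonempty (Fin m) := ⟨⟨0, hm⟩⟩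
  have gap : ∀ k, F (x (k+1)) - Fstar ≤ L / 2 * ‖x k - x (k+1)‖^2 := by
    intro k
    have hmodel : ⨆ i, f i (x (k+1)) ≤ ell k (x (k+1)) + L / 2 * ‖x k - x (k+1)‖^2 := by
      rw [hell]
      exact iSup_le_iSup_add_of_le fun i => by linarith [hsmooth k i _ (hx (k+1))]
    linarith [hF (x (k+1)), hfeas k]
  have energy : ∀ k, F (x (k+1)) - Fstar
      ≤ L / 2 * ‖x k - xstar‖^2 - L / 2 * ‖x (k+1) - xstar‖^2 := fun k => by
    nlinarith [gap k, hdec k]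
  refine ⟨fun k => ?_, fun T hT => ?_⟩
  · have hscaled := mul_le_mul_of_nonneg_left (energy k) (one_div_nonneg.mpr hL.le)
    have hcancel : 1 / L * (L / 2 * ‖x k - xstar‖^2 - L / 2 * ‖x (k+1) - xstar‖^2)
        = 1 / 2 * ‖x k - xstar‖^2 - 1 / 2 * ‖x (k+1) - xstar‖^2 := by
      field_simp
    linarith
  · rw [← div_div]
    refine average_sub_le_of_sum_sub_le hT ?_
    calc ∑ k ∈ Icc 1 T, (F (x k) - Fstar)
        ≤ L / 2 * ‖x 0 - xstar‖^2 - L / 2 * ‖x T - xstar‖^2 :=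
          sum_Icc_le_sub_of_le_sub_succ (a := fun k => F (x k) - Fstar)
            (d := fun k => L / 2 * ‖x k - xstar‖^2) energy T
      _ ≤ L * ‖x 0 - xstar‖^2 / 2 := by nlinarith [sq_nonneg ‖x T - xstar‖]

/-- Basic Composite Subgradient Method in the Euclidean smooth case:
per-step decrease and averaged rate `1/T Σ F(x_k) - F* ≤ L‖x₀-x*‖²/(2T)`. -/
theorem stmt_10 {E : Type*} [NormedAddCommGroup E] [InnerProductSpace ℝ E]
    (m : ℕ) (hm : 0 < m) (f : Fin m → E → ℝ) (ψ : E → ℝ) (S : Set E)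
    (hSconv : Convex ℝ S)
    (hconv : ∀ i, ConvexOn ℝ S (f i))
    (F : E → ℝ) (hF : ∀ y, F y = (⨆ i, f i y) + ψ y)
    (xstar : E) (hxstar : xstar ∈ S) (hFmin : ∀ y ∈ S, F xstar ≤ F y)
    (Fstar : ℝ) (hFstar : Fstar = F xstar)
    (L : ℝ) (hL : 0 < L)
    (x : ℕ → E) (hx : ∀ k, x k ∈ S)
    (g : ℕ → Fin m → E)
    (hsub : ∀ k i, ∀ y ∈ S, f i (x k) + (inner ℝ (g k i) (y - x k) : ℝ) ≤ f i y)
    (hsmooth : ∀ k i, ∀ y ∈ S,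
      f i y ≤ f i (x k) + (inner ℝ (g k i) (y - x k) : ℝ) + (1/2) * L * ‖x k - y‖^2)
    (ell : ℕ → E → ℝ)
    (hell : ∀ k y, ell k y = ⨆ i, (f i (x k) + (inner ℝ (g k i) (y - x k) : ℝ)))
    (hfeas : ∀ k, ell k (x (k+1)) + ψ (x (k+1)) ≤ Fstar)
    (hdec : ∀ k, ‖x (k+1) - xstar‖^2 ≤ ‖x k - xstar‖^2 - ‖x k - x (k+1)‖^2) :
    (∀ k, (1/2) * ‖x (k+1) - xstar‖^2
        ≤ (1/2) * ‖x k - xstar‖^2 - (1/L) * (F (x (k+1)) - Fstar))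
      ∧ ∀ T : ℕ, 1 ≤ T →
        (1/(T:ℝ)) * ∑ k ∈ Finset.Icc 1 T, F (x k) - Fstar
          ≤ L * ‖x 0 - xstar‖^2 / (2 * T) :=
  stmt_10_general m hm f ψ S F hF xstar Fstar L hL x hx g hsmooth ell hell hfeas hdec
end
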